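/- For every real x with 0 ≤ x ≤ 1/3, the Werner state ρ_Wer(x) is separable: there exist a finite family of 2×2 density matrices ρ_{A,p}, ρ_{B,p} and nonnegative reals w^p with Σ_p w^p = 1 such that ρ_Wer(x) = Σ_p w^p · (ρ_{A,p} ⊗ ρ_{B,p}). -/

import Mathlib

open Matrix Kronecker ComplexOrder

/-- The Werner state, as a 4×4 matrix with indices identified with pairs
`(a,b) ∈ {0,1}²` via `2a+b`. -/
noncomputable def werner (x : ℝ) : Matrix (Fin 2 × Fin 2) (Fin 2 × Fin 2) ℂ :=
  Matrix.of fun p q =>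
    (!![((1 - x : ℝ) : ℂ) / 4, 0, 0, 0;
        0, ((1 + x : ℝ) : ℂ) / 4, -((x : ℂ)) / 2, 0;
        0, -((x : ℂ)) / 2, ((1 + x : ℝ) : ℂ) / 4, 0;
        0, 0, 0, ((1 - x : ℝ) : ℂ) / 4] : Matrix (Fin 4) (Fin 4) ℂ)
      (finProdFinEquiv p) (finProdFinEquiv q)

/-!
In terms of the Pauli matrices, `werner x = ¼ (1 - x ∑ₖ σₖ ⊗ σₖ)`. For an involution `σ` the
spectral projections `P± = (1 ± σ)/2` satisfy `P₊ ⊗ P₋ + P₋ ⊗ P₊ = ½ (1 - σ ⊗ σ)`. Hence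
`werner x` is the mixture, with weight `x/2` each, of the six product states `P±ᵏ ⊗ P∓ᵏ`, plus
weight `1 - 3x` of the maximally mixed product state; these weights form a probability vector
exactly when `0 ≤ x ≤ 1/3`.
-/

namespace Matrix

section Kronecker

variable {α l m n p : Type*} [Mul α] [HasDistribNeg α]

theorem neg_kronecker (A : Matrix l m α) (B : Matrix n p α) : (-A) ⊗ₖ B = -(A ⊗ₖ B) := by
  ext; simp

theorem kronecker_neg (A : Matrix l m α) (B : Matrix n p α) : A ⊗ₖ (-B) = -(A ⊗ₖ B) := by
  ext; simp

end Kronecker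

theorem IsHermitian.posSemidef_of_isIdempotentElem {R n : Type*} [Fintype n] [CommRing R]
    [PartialOrder R] [StarRing R] [StarOrderedRing R] {P : Matrix n n R} (hP : P.IsHermitian)
    (hPP : IsIdempotentElem P) : P.PosSemidef := by
  have h : P = Pᴴ * P := by rw [hP.eq, hPP.eq]
  exact h ▸ posSemidef_conjTranspose_mul_self P

end Matrix

def IsDensityMatrix {n : Type*} [Fintype n] (ρ : Matrix n n ℂ) : Prop :=
  ρ.PosSemidef ∧ ρ.trace = 1

noncomputable def maximallyMixed (n : Type*) [Fintype n] [DecidableEq n] : Matrix n n ℂ :=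
  (Fintype.card n : ℂ)⁻¹ • 1

theorem isDensityMatrix_maximallyMixed {n : Type*} [Fintype n] [DecidableEq n] [Nonempty n] :
    IsDensityMatrix (maximallyMixed n) :=
  ⟨PosSemidef.one.smul (by positivity), by simp [maximallyMixed, trace_smul]⟩

/-- The projection onto the `+1`-eigenspace of an involution `A`. -/
noncomputable def plusProj {n : Type*} [DecidableEq n] (A : Matrix n n ℂ) : Matrix n n ℂ :=
  (1 / 2 : ℂ) • (1 + A)

theorem isDensityMatrix_plusProj {A : Matrix (Fin 2) (Fin 2) ℂ} (hA : A.IsHermitian)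
    (hAA : A * A = 1) (htr : A.trace = 0) : IsDensityMatrix (plusProj A) := by
  refine ⟨IsHermitian.posSemidef_of_isIdempotentElem ?_ ?_, ?_⟩
  · simp [IsHermitian, plusProj, conjTranspose_smul, hA.eq]
  · simp only [IsIdempotentElem, plusProj, smul_mul_smul, add_mul, mul_add, one_mul, mul_one, hAA]
    module
  · simp [plusProj, trace_smul, htr]

theorem plusProj_kronecker_plusProj_neg_add_swap {m n : Type*} [DecidableEq m] [DecidableEq n]
    (A : Matrix m m ℂ) (B : Matrix n n ℂ) :
    plusProj A ⊗ₖ plusProj (-B) + plusProj (-A) ⊗ₖ plusProj B =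
      (1 / 2 : ℂ) • (1 ⊗ₖ 1 - A ⊗ₖ B) := by
  simp only [plusProj, smul_kronecker, kronecker_smul, add_kronecker, kronecker_add,
    neg_kronecker, kronecker_neg]
  module

noncomputable def pauli : Fin 3 → Matrix (Fin 2) (Fin 2) ℂ :=
  ![!![0, 1; 1, 0], !![0, -Complex.I; Complex.I, 0], !![1, 0; 0, -1]]

theorem pauli_isHermitian (k : Fin 3) : (pauli k).IsHermitian := by
  fin_cases k <;> ext i j <;> fin_cases i <;> fin_cases j <;> simp [pauli]

theorem pauli_mul_self (k : Fin 3) : pauli k * pauli k = 1 := by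
  fin_cases k <;> ext i j <;> fin_cases i <;> fin_cases j <;> simp [pauli]

theorem trace_pauli (k : Fin 3) : (pauli k).trace = 0 := by
  fin_cases k <;> simp [pauli, trace_fin_two]

theorem isDensityMatrix_plusProj_pauli (k : Fin 3) (b : Bool) :
    IsDensityMatrix (plusProj (bif b then pauli k else -pauli k)) := by
  cases b
  · exact isDensityMatrix_plusProj (pauli_isHermitian k).neg (by simp [pauli_mul_self])
      (by simp [trace_pauli])
  · exact isDensityMatrix_plusProj (pauli_isHermitian k) (pauli_mul_self k) (trace_pauli k)

theorem werner_eq_pauli (x : ℝ) :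
    werner x = (1 / 4 : ℂ) • (1 - (x : ℂ) • ∑ k, pauli k ⊗ₖ pauli k) := by
  ext ⟨i, j⟩ ⟨k, l⟩
  fin_cases i <;> fin_cases j <;> fin_cases k <;> fin_cases l <;>
    simp [werner, finProdFinEquiv, pauli, Fin.sum_univ_three] <;> ring

noncomputable def wernerWeight (x : ℝ) : Option (Fin 3 × Bool) → ℝ
  | none => 1 - 3 * x
  | some _ => x / 2

noncomputable def wernerStateA : Option (Fin 3 × Bool) → Matrix (Fin 2) (Fin 2) ℂ
  | none => maximallyMixed (Fin 2)
  | some (k, b) => plusProj (bif b then pauli k else -pauli k)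

noncomputable def wernerStateB : Option (Fin 3 × Bool) → Matrix (Fin 2) (Fin 2) ℂ
  | none => maximallyMixed (Fin 2)
  | some (k, b) => plusProj (bif b then -pauli k else pauli k)

theorem wernerWeight_nonneg {x : ℝ} (hx0 : 0 ≤ x) (hx : x ≤ 1 / 3) (i : Option (Fin 3 × Bool)) :
    0 ≤ wernerWeight x i := by
  rcases i with _ | _ <;> simp only [wernerWeight] <;> linarith

theorem sum_wernerWeight (x : ℝ) : ∑ i, wernerWeight x i = 1 := by
  simp only [Fintype.sum_option, wernerWeight, Finset.sum_const, Finset.card_univ,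
    Fintype.card_prod, Fintype.card_fin, Fintype.card_bool, nsmul_eq_mul]
  norm_num
  ring

theorem isDensityMatrix_wernerStateA (i : Option (Fin 3 × Bool)) :
    IsDensityMatrix (wernerStateA i) := by
  rcases i with _ | ⟨k, b⟩
  · exact isDensityMatrix_maximallyMixed
  · exact isDensityMatrix_plusProj_pauli k b

theorem isDensityMatrix_wernerStateB (i : Option (Fin 3 × Bool)) :
    IsDensityMatrix (wernerStateB i) := by
  rcases i with _ | ⟨k, b⟩
  · exact isDensityMatrix_maximallyMixed
  · simpa [wernerStateB] using isDensityMatrix_plusProj_pauli k (!b)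

theorem werner_eq_sum_wernerWeight_smul (x : ℝ) :
    werner x = ∑ i, (wernerWeight x i : ℂ) • (wernerStateA i ⊗ₖ wernerStateB i) := by
  simp only [Fintype.sum_option, Fintype.sum_prod_type, Fintype.sum_bool, wernerWeight,
    wernerStateA, wernerStateB, cond_true, cond_false, ← smul_add,
    plusProj_kronecker_plusProj_neg_add_swap]
  rw [werner_eq_pauli]
  simp only [maximallyMixed, Fintype.card_fin, smul_kronecker, kronecker_smul, one_kronecker_one,
    Fin.sum_univ_three]
  push_cast
  module

theorem exists_fin_decomposition_of_fintype {ι m n : Type*} [Fintype ι] [Fintype m] [Fintype n]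
    {ρ : Matrix (m × n) (m × n) ℂ} (w : ι → ℝ) (ρA : ι → Matrix m m ℂ) (ρB : ι → Matrix n n ℂ)
    (hw : ∀ i, 0 ≤ w i) (hw1 : ∑ i, w i = 1) (hA : ∀ i, IsDensityMatrix (ρA i))
    (hB : ∀ i, IsDensityMatrix (ρB i)) (hρ : ρ = ∑ i, (w i : ℂ) • (ρA i ⊗ₖ ρB i)) :
    ∃ (s : ℕ) (w : Fin s → ℝ) (ρA : Fin s → Matrix m m ℂ) (ρB : Fin s → Matrix n n ℂ),
      (∀ p, 0 ≤ w p) ∧ (∑ p : Fin s, w p) = 1 ∧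
      (∀ p, (ρA p).IsHermitian ∧ (ρA p).PosSemidef ∧ (ρA p).trace = 1) ∧
      (∀ p, (ρB p).IsHermitian ∧ (ρB p).PosSemidef ∧ (ρB p).trace = 1) ∧
      ρ = ∑ p : Fin s, (w p : ℂ) • (ρA p ⊗ₖ ρB p) := by
  let e := (Fintype.equivFin ι).symm
  refine ⟨Fintype.card ι, w ∘ e, ρA ∘ e, ρB ∘ e, fun p => hw (e p), ?_,
    fun p => ⟨(hA (e p)).1.isHermitian, hA (e p)⟩,
    fun p => ⟨(hB (e p)).1.isHermitian, hB (e p)⟩, ?_⟩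
  · rw [← hw1]
    exact e.sum_comp w
  · rw [hρ]
    exact (e.sum_comp fun i => (w i : ℂ) • (ρA i ⊗ₖ ρB i)).symm

theorem stmt_13 (x : ℝ) (hx0 : 0 ≤ x) (hx : x ≤ 1 / 3) :
    ∃ (s : ℕ) (w : Fin s → ℝ) (ρA ρB : Fin s → Matrix (Fin 2) (Fin 2) ℂ),
      (∀ p, 0 ≤ w p) ∧ (∑ p : Fin s, w p) = 1 ∧
      (∀ p, (ρA p).IsHermitian ∧ (ρA p).PosSemidef ∧ (ρA p).trace = 1) ∧
      (∀ p, (ρB p).IsHermitian ∧ (ρB p).PosSemidef ∧ (ρB p).trace = 1) ∧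
      werner x = ∑ p : Fin s, (w p : ℂ) • (ρA p ⊗ₖ ρB p) :=
  exists_fin_decomposition_of_fintype (wernerWeight x) wernerStateA wernerStateB
    (wernerWeight_nonneg hx0 hx) (sum_wernerWeight x) isDensityMatrix_wernerStateA
    isDensityMatrix_wernerStateB (werner_eq_sum_wernerWeight_smul x)
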